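/- Assume the numerical hypotheses of a smooth Fano weighted hypersurface stated in the context, and set γ := (n+1)·a_{n+1}/(ι·d). Assume moreover ι ≤ 3 and a_n = 1. Then γ > 1, with the following exceptions: if ι = 2 and a_{n+1} = 2 then γ = 1; if ι = 3 and a_{n+1} = 2 then, writing d = 2k, γ = 2/3 + 1/(3k) < 1; if ι = 3 and a_{n+1} = 3 then γ = 1. -/
import Mathlib


/-- For the weights and degree of a smooth Fano weighted
hypersurface with `ι ≤ 3` and `a_n = 1`, setting `γ = (n+1)·a_{n+1}/(ι·d)`:
if `ι = 2` and `a_{n+1} = 2` then `γ = 1`; if `ι = 3` and `a_{n+1} = 2` then,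
writing `d = 2k`, `γ = 2/3 + 1/(3k) < 1`; if `ι = 3` and `a_{n+1} = 3` then
`γ = 1`; and in all remaining cases `γ > 1`. -/
theorem gamma_case_an_eq_one (n : ℕ) (hn : 1 ≤ n) (a : Fin (n + 2) → ℕ) (d ι : ℕ)
    (ha_pos : ∀ i, 0 < a i) (ha_mono : Monotone a)
    (ha_top : 1 < a (Fin.last (n + 1)))
    (hd : 0 < d) (hι : 0 < ι)
    (hdvd : ∀ i, a i ∣ d)
    (hcop : ∀ i j : Fin (n + 2), i ≠ j → Nat.Coprime (a i) (a j))
    (hadj : ∑ i, a i = d + ι)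
    (hlc : ∀ i, d ≠ a i)
    (hι3 : ι ≤ 3) (han : a ⟨n, by omega⟩ = 1) :
    (ι = 2 ∧ a (Fin.last (n + 1)) = 2 →
      ((n + 1 : ℚ) * (a (Fin.last (n + 1)) : ℚ)) / ((ι : ℚ) * (d : ℚ)) = 1) ∧
    (ι = 3 ∧ a (Fin.last (n + 1)) = 2 →
      ∃ k : ℕ, 0 < k ∧ d = 2 * k ∧
        ((n + 1 : ℚ) * (a (Fin.last (n + 1)) : ℚ)) / ((ι : ℚ) * (d : ℚ)) =
          2 / 3 + 1 / (3 * (k : ℚ)) ∧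
        ((n + 1 : ℚ) * (a (Fin.last (n + 1)) : ℚ)) / ((ι : ℚ) * (d : ℚ)) < 1) ∧
    (ι = 3 ∧ a (Fin.last (n + 1)) = 3 →
      ((n + 1 : ℚ) * (a (Fin.last (n + 1)) : ℚ)) / ((ι : ℚ) * (d : ℚ)) = 1) ∧
    (¬(ι = 2 ∧ a (Fin.last (n + 1)) = 2) →
      ¬(ι = 3 ∧ a (Fin.last (n + 1)) = 2) →
      ¬(ι = 3 ∧ a (Fin.last (n + 1)) = 3) →
      ((n + 1 : ℚ) * (a (Fin.last (n + 1)) : ℚ)) / ((ι : ℚ) * (d : ℚ)) > 1) := by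
  set A := a (Fin.last (n + 1)) with hA
  -- all weights except the last are 1
  have hones : ∀ i : Fin (n + 1), a i.castSucc = 1 := by
    intro i
    have h1 := ha_pos i.castSucc
    have h2 : a i.castSucc ≤ a ⟨n, by omega⟩ :=
      ha_mono (by simp [Fin.le_def]; omega)
    omega
  have hsum : (n + 1) + A = d + ι := by
    rw [Fin.sum_univ_castSucc] at hadj
    rw [Finset.sum_congr rfl (fun i _ => hones i)] at hadj
    simpa using hadj
  -- d ≥ 2A
  have hAd : A ∣ d := hdvd (Fin.last (n + 1))
  have hdA : 2 * A ≤ d := by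
    obtain ⟨c, hc⟩ := hAd
    have hc0 : c ≠ 0 := by rintro rfl; omega
    have hc1 : c ≠ 1 := by rintro rfl; exact hlc (Fin.last (n + 1)) (by omega)
    have : 2 ≤ c := by omega
    calc 2 * A = A * 2 := by ring
    _ ≤ A * c := Nat.mul_le_mul_left A this
    _ = d := hc.symm
  have hA2 : 2 ≤ A := ha_top
  -- cast facts
  have hsumQ : (n : ℚ) + 1 + (A : ℚ) = (d : ℚ) + (ι : ℚ) := by
    exact_mod_cast congrArg (Nat.cast : ℕ → ℚ) hsum
  have hdQ : (0 : ℚ) < (d : ℚ) := by exact_mod_cast hd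
  refine ⟨?_, ?_, ?_, ?_⟩
  · rintro ⟨rfl, hA2'⟩
    rw [hA2'] at hsumQ ⊢
    have hι2 : ((2 : ℕ) : ℚ) = 2 := by norm_num
    rw [hι2]
    field_simp
    push_cast at hsumQ ⊢
    linarith
  · rintro ⟨rfl, hA2'⟩
    have h2d : 2 ∣ d := by rw [← hA2']; exact hAd
    obtain ⟨k, hk⟩ := h2d
    have hk2 : 2 ≤ k := by
      rw [hA2'] at hdA; omega
    refine ⟨k, by omega, hk, ?_, ?_⟩
    · rw [hA2'] at hsumQ ⊢
      have hkQ : (d : ℚ) = 2 * (k : ℚ) := by exact_mod_cast congrArg (Nat.cast : ℕ → ℚ) hk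
      have hk0 : (k : ℚ) ≠ 0 := by
        have : (0:ℚ) < (k:ℚ) := by exact_mod_cast (by omega : 0 < k)
        linarith
      rw [hkQ] at hsumQ
      field_simp
      push_cast at hsumQ ⊢
      nlinarith [hsumQ]
    · rw [hA2'] at hsumQ ⊢
      rw [div_lt_one (by positivity)]
      have hkQ : (d : ℚ) = 2 * (k : ℚ) := by exact_mod_cast congrArg (Nat.cast : ℕ → ℚ) hk
      have hkge : (2 : ℚ) ≤ (k : ℚ) := by exact_mod_cast hk2
      push_cast at hsumQ ⊢
      nlinarith [hsumQ, hkQ, hkge]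
  · rintro ⟨rfl, hA3⟩
    rw [hA3] at hsumQ ⊢
    field_simp
    push_cast at hsumQ ⊢
    linarith
  · intro h1 h2 h3
    have hAι : ι < A := by
      interval_cases ι
      · omega
      · rcases Nat.eq_or_lt_of_le hA2 with h | h
        · exact absurd ⟨rfl, h.symm⟩ h1
        · omega
      · have hA2' : A ≠ 2 := fun h => h2 ⟨rfl, h⟩
        have hA3' : A ≠ 3 := fun h => h3 ⟨rfl, h⟩
        omega
    rw [gt_iff_lt, lt_div_iff₀ (by positivity), one_mul]
    have hAQ : (ι : ℚ) + 1 ≤ (A : ℚ) := by exact_mod_cast hAι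
    have hdAQ : (A : ℚ) + 1 ≤ (d : ℚ) := by
      have : A + 1 ≤ d := by omega
      exact_mod_cast this
    have key : (1 : ℚ) ≤ ((A : ℚ) - ι) * ((d : ℚ) - A) := by
      have h1' : (1 : ℚ) ≤ (A : ℚ) - ι := by linarith
      have h2' : (1 : ℚ) ≤ (d : ℚ) - A := by linarith
      nlinarith
    nlinarith [key, hsumQ]
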